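/- arXiv:2108.04849 — 2 statements merged into one kernel-verified Lean document; each statement's English description precedes it below -/
import Mathlib

section
/- The number of unranked labeled tree shapes compatible with a labeled binary perfect phylogeny (pi1, pi2) equals the product of the numbers of unranked labeled tree shapes compatible with pi1 and with pi2. -/
/-- A labeled perfect phylogeny: a rooted binary tree whose leaves carry sets of
sample labels. -/
inductive LPP : Type
  | leaf : Finset ℕ → LPP
  | node : LPP → LPP → LPP

namespace LPP

/-- The set of sample labels of a labeled perfect phylogeny. -/
def samples : LPP → Finset ℕ
  | leaf s => s
  | node l r => l.samples ∪ r.samples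

/-- Validity: leaves carry nonempty label sets, and subtrees carry disjoint label sets. -/
def Valid : LPP → Prop
  | leaf s => s.Nonempty
  | node l r => l.Valid ∧ r.Valid ∧ Disjoint l.samples r.samples

/-- One elementary coarsening step: collapsing a cherry (merging the label sets of two
pendant leaf edges), anywhere in the tree; children are unordered. -/
inductive Step : LPP → LPP → Prop
  | cherry (a b : Finset ℕ) : Step (node (leaf a) (leaf b)) (leaf (a ∪ b))
  | swap (s t : LPP) : Step (node s t) (node t s)
  | left {t t' : LPP} (s : LPP) : Step t t' → Step (node t s) (node t' s)
  | right {t t' : LPP} (s : LPP) : Step t t' → Step (node s t) (node s t')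

/-- `π.Refines σ` iff `σ` is obtained from `π` by sequentially collapsing cherries. -/
def Refines (π σ : LPP) : Prop := Relation.ReflTransGen Step π σ

end LPP

/-- An unranked labeled tree: rooted binary tree with leaves labeled by samples and
unlabeled internal nodes (ordered children; unranked labeled tree shapes are the
quotient by `ULTree.Equiv`). -/
inductive ULTree : Type
  | leaf : ℕ → ULTree
  | node : ULTree → ULTree → ULTree

namespace ULTree

/-- Multiset of leaf labels. -/
def leafLabels : ULTree → Multiset ℕ
  | leaf x => {x}
  | node l r => l.leafLabels + r.leafLabels

/-- The labeled perfect phylogeny obtained by viewing each leaf as a singleton block. -/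
def toLPP : ULTree → LPP
  | leaf x => LPP.leaf {x}
  | node l r => LPP.node l.toLPP r.toLPP

/-- `t.Valid s`: the leaves of `t` are labeled bijectively by the sample set `s`. -/
def Valid (t : ULTree) (s : Finset ℕ) : Prop := t.leafLabels = s.val

/-- Equality of labeled trees up to reordering of children. -/
inductive Equiv : ULTree → ULTree → Prop
  | leaf (x : ℕ) : Equiv (leaf x) (leaf x)
  | node {a b c d : ULTree} : Equiv a c → Equiv b d → Equiv (node a b) (node c d)
  | swap {a b c d : ULTree} : Equiv a d → Equiv b c → Equiv (node a b) (node c d)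

end ULTree

/-- `GXcount π` is the number of unranked labeled tree shapes compatible with the
labeled perfect phylogeny `π`. -/
noncomputable def GXcount (π : LPP) : ℕ :=
  Nat.card {q : Quot ULTree.Equiv //
    ∃ t : ULTree, Quot.mk _ t = q ∧ t.Valid π.samples ∧ LPP.Refines t.toLPP π}

/-!
A tree compatible with `node π₁ π₂` is a root join of a tree compatible with `π₁` and one
compatible with `π₂`, in either order. Because the label sets of `π₁` and `π₂` are disjoint
and nonempty, the leaf labels of each subtree tell which side it belongs to, so joining at
the root is a bijection from pairs of compatible shapes onto the compatible shapes of
`node π₁ π₂`.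
-/

namespace LPP

theorem Step.samples_eq {π σ : LPP} (h : Step π σ) : π.samples = σ.samples := by
  induction h with
  | cherry => rfl
  | swap => exact Finset.union_comm _ _
  | left s _ ih => simp only [samples, ih]
  | right s _ ih => simp only [samples, ih]

theorem Refines.samples_eq {π σ : LPP} (h : Refines π σ) : π.samples = σ.samples := by
  induction h with
  | refl => rfl
  | tail _ hstep ih => exact ih.trans hstep.samples_eq

theorem refines_leaf_iff {s : Finset ℕ} {σ : LPP} : Refines (leaf s) σ ↔ σ = leaf s := by
  refine ⟨fun h => ?_, fun h => h ▸ .refl⟩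
  rcases h.cases_head with h | ⟨_, hstep, _⟩
  · exact h.symm
  · cases hstep

theorem refines_node_of_refines {a b c d : LPP} (hac : Refines a c) (hbd : Refines b d) :
    Refines (node a b) (node c d) :=
  (hac.lift (node · b) fun _ _ => Step.left b).trans
    (hbd.lift (node c ·) fun _ _ => Step.right c)

theorem refines_of_refines_node {x c d : LPP} (h : Refines x (node c d)) :
    ∀ {a b}, x = node a b → (Refines a c ∧ Refines b d) ∨ (Refines a d ∧ Refines b c) := by
  induction h using Relation.ReflTransGen.head_induction_on with
  | refl =>
    rintro a b ⟨⟩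
    exact .inl ⟨.refl, .refl⟩
  | head hstep hrest ih =>
    rintro a b rfl
    cases hstep with
    | cherry => cases refines_leaf_iff.mp hrest
    | swap => exact (ih rfl).symm.imp And.symm And.symm
    | left _ hst => exact (ih rfl).imp (.imp_left (.head hst)) (.imp_left (.head hst))
    | right _ hst => exact (ih rfl).imp (.imp_right (.head hst)) (.imp_right (.head hst))

theorem refines_node_iff {a b c d : LPP} :
    Refines (node a b) (node c d) ↔
      (Refines a c ∧ Refines b d) ∨ (Refines a d ∧ Refines b c) := by
  refine ⟨fun h => refines_of_refines_node h rfl, ?_⟩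
  rintro (⟨hac, hbd⟩ | ⟨had, hbc⟩)
  · exact refines_node_of_refines hac hbd
  · exact .head (.swap a b) (refines_node_of_refines hbc had)

theorem Valid.samples_nonempty : ∀ {π : LPP}, π.Valid → π.samples.Nonempty
  | leaf _, h => h
  | node _ _, h => h.1.samples_nonempty.mono Finset.subset_union_left

end LPP

namespace ULTree

theorem equivalence_equiv : Equivalence Equiv where
  refl := refl
  symm := symm
  trans := trans
where
  refl : ∀ t, Equiv t t
    | leaf x => .leaf x
    | node l r => .node (refl l) (refl r)
  symm {a b} (h : Equiv a b) : Equiv b a := by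
    induction h with
    | leaf x => exact .leaf x
    | node _ _ ih₁ ih₂ => exact .node ih₁ ih₂
    | swap _ _ ih₁ ih₂ => exact .swap ih₂ ih₁
  trans {a b c} (hab : Equiv a b) (hbc : Equiv b c) : Equiv a c := by
    induction hab generalizing c with
    | leaf => exact hbc
    | node _ _ ih₁ ih₂ =>
      cases hbc with
      | node h₁ h₂ => exact .node (ih₁ h₁) (ih₂ h₂)
      | swap h₁ h₂ => exact .swap (ih₁ h₁) (ih₂ h₂)
    | swap _ _ ih₁ ih₂ =>
      cases hbc with
      | node h₁ h₂ => exact .swap (ih₁ h₂) (ih₂ h₁)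
      | swap h₁ h₂ => exact .node (ih₁ h₂) (ih₂ h₁)

theorem mk_eq_mk_iff {a b : ULTree} : Quot.mk Equiv a = Quot.mk Equiv b ↔ Equiv a b :=
  Quot.eq.trans equivalence_equiv.eqvGen_iff

theorem Equiv.leafLabels_eq {a b : ULTree} (h : Equiv a b) : a.leafLabels = b.leafLabels := by
  induction h with
  | leaf => rfl
  | node _ _ ih₁ ih₂ => simp only [leafLabels, ih₁, ih₂]
  | swap _ _ ih₁ ih₂ => simp only [leafLabels, ih₁, ih₂, add_comm]

theorem toFinset_leafLabels : ∀ t : ULTree, t.leafLabels.toFinset = t.toLPP.samples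
  | leaf _ => rfl
  | node l r => by
    rw [leafLabels, Multiset.toFinset_add, toFinset_leafLabels l, toFinset_leafLabels r]
    rfl

def qnode : Quot Equiv → Quot Equiv → Quot Equiv :=
  Quot.lift₂ (fun a b => Quot.mk Equiv (node a b))
    (fun a _ _ h => Quot.sound (.node (equivalence_equiv.refl a) h))
    (fun _ _ b h => Quot.sound (.node h (equivalence_equiv.refl b)))

def Compatible (t : ULTree) (π : LPP) : Prop :=
  t.Valid π.samples ∧ t.toLPP.Refines π

theorem toFinset_leafLabels_of_refines {t : ULTree} {π : LPP} (h : t.toLPP.Refines π) :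
    t.leafLabels.toFinset = π.samples := by
  rw [toFinset_leafLabels, h.samples_eq]

theorem compatible_iff {t : ULTree} {π : LPP} :
    t.Compatible π ↔ t.leafLabels.Nodup ∧ t.toLPP.Refines π := by
  refine ⟨fun ⟨hval, href⟩ => ⟨hval ▸ π.samples.nodup, href⟩, fun ⟨hnd, href⟩ => ⟨?_, href⟩⟩
  rw [Valid, ← toFinset_leafLabels_of_refines href, Multiset.toFinset_val, hnd.dedup]

theorem not_compatible_leaf_node (x : ℕ) (π₁ π₂ : LPP) :
    ¬ (leaf x).Compatible (.node π₁ π₂) := fun h =>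
  LPP.noConfusion (LPP.refines_leaf_iff.mp h.2)

theorem disjoint_leafLabels_of_refines {t₁ t₂ : ULTree} {π₁ π₂ : LPP}
    (h₁ : t₁.toLPP.Refines π₁) (h₂ : t₂.toLPP.Refines π₂)
    (hdis : Disjoint π₁.samples π₂.samples) : Disjoint t₁.leafLabels t₂.leafLabels := by
  rwa [← Multiset.disjoint_toFinset, toFinset_leafLabels_of_refines h₁,
    toFinset_leafLabels_of_refines h₂]

theorem compatible_node_iff {t₁ t₂ : ULTree} {π₁ π₂ : LPP}
    (hdis : Disjoint π₁.samples π₂.samples) :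
    (node t₁ t₂).Compatible (.node π₁ π₂) ↔
      (t₁.Compatible π₁ ∧ t₂.Compatible π₂) ∨ (t₁.Compatible π₂ ∧ t₂.Compatible π₁) := by
  simp only [compatible_iff, leafLabels, Multiset.nodup_add, toLPP, LPP.refines_node_iff]
  constructor
  · rintro ⟨⟨hnd₁, hnd₂, -⟩, ⟨r₁, r₂⟩ | ⟨r₁, r₂⟩⟩
    exacts [.inl ⟨⟨hnd₁, r₁⟩, hnd₂, r₂⟩, .inr ⟨⟨hnd₁, r₁⟩, hnd₂, r₂⟩]
  · rintro (⟨h₁, h₂⟩ | ⟨h₁, h₂⟩)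
    · exact ⟨⟨h₁.1, h₂.1, disjoint_leafLabels_of_refines h₁.2 h₂.2 hdis⟩, .inl ⟨h₁.2, h₂.2⟩⟩
    · exact ⟨⟨h₁.1, h₂.1, disjoint_leafLabels_of_refines h₁.2 h₂.2 hdis.symm⟩,
        .inr ⟨h₁.2, h₂.2⟩⟩

end ULTree

def compatibleShapes (π : LPP) : Set (Quot ULTree.Equiv) :=
  {q | ∃ t : ULTree, Quot.mk _ t = q ∧ t.Compatible π}

theorem GXcount_eq_ncard (π : LPP) : GXcount π = (compatibleShapes π).ncard :=
  Nat.card_coe_set_eq _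

open ULTree in
theorem compatibleShapes_node {π₁ π₂ : LPP} (hdis : Disjoint π₁.samples π₂.samples) :
    compatibleShapes (.node π₁ π₂) =
      Set.image2 qnode (compatibleShapes π₁) (compatibleShapes π₂) := by
  ext q
  constructor
  · rintro ⟨_ | ⟨t₁, t₂⟩, rfl, ht⟩
    · exact absurd ht (not_compatible_leaf_node _ _ _)
    rcases (compatible_node_iff hdis).mp ht with ⟨h₁, h₂⟩ | ⟨h₁, h₂⟩
    · exact ⟨_, ⟨t₁, rfl, h₁⟩, _, ⟨t₂, rfl, h₂⟩, rfl⟩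
    · exact ⟨_, ⟨t₂, rfl, h₂⟩, _, ⟨t₁, rfl, h₁⟩,
        Quot.sound (.swap (equivalence_equiv.refl t₂) (equivalence_equiv.refl t₁))⟩
  · rintro ⟨_, ⟨t₁, rfl, h₁⟩, _, ⟨t₂, rfl, h₂⟩, rfl⟩
    exact ⟨node t₁ t₂, rfl, (compatible_node_iff hdis).mpr (.inl ⟨h₁, h₂⟩)⟩

open ULTree in
theorem qnode_injOn_compatibleShapes {π₁ π₂ : LPP} (hne : π₁.samples.Nonempty)
    (hdis : Disjoint π₁.samples π₂.samples) :
    Set.InjOn (fun p => qnode p.1 p.2) (compatibleShapes π₁ ×ˢ compatibleShapes π₂) := by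
  rintro ⟨_, _⟩ ⟨⟨t₁, rfl, h₁⟩, ⟨t₂, rfl, -⟩⟩ ⟨_, _⟩ ⟨⟨t₁', rfl, -⟩, ⟨t₂', rfl, h₂'⟩⟩ h
  rcases mk_eq_mk_iff.mp h with _ | ⟨e₁, e₂⟩ | ⟨e₁, -⟩
  · exact Prod.ext (mk_eq_mk_iff.mpr e₁) (mk_eq_mk_iff.mpr e₂)
  · have hsame : π₁.samples = π₂.samples := by
      rw [← toFinset_leafLabels_of_refines h₁.2, ← toFinset_leafLabels_of_refines h₂'.2,
        e₁.leafLabels_eq]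
    rw [← hsame, disjoint_self, Finset.bot_eq_empty] at hdis
    exact absurd hdis hne.ne_empty

/-- Proposition 7: the number of unranked labeled tree shapes compatible with a labeled
binary perfect phylogeny `(π₁, π₂)` equals the product of the counts for `π₁` and
`π₂`. -/
theorem unrankedLabeled_compatible_node (π₁ π₂ : LPP)
    (hv : LPP.Valid (LPP.node π₁ π₂)) :
    GXcount (LPP.node π₁ π₂) = GXcount π₁ * GXcount π₂ := by
  obtain ⟨hv₁, -, hdis⟩ := hv
  simp only [GXcount_eq_ncard]
  rw [compatibleShapes_node hdis, ← Set.image_prod,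
    (qnode_injOn_compatibleShapes hv₁.samples_nonempty hdis).ncard_image,
    Set.ncard_prod]
end

section
/- The number of ranked labeled tree shapes compatible with the labeled cherry perfect phylogeny (x, n−x) equals binomial(n−2, x−1)·L_x·L_{n−x} = [n!(n−2)!/2^{n−2}] / binomial(n, x), where L_m = m!(m−1)!/2^{m−1}. -/
/-- A ranked labeled tree: rooted binary tree with leaves labeled by samples and ranks
on internal nodes (ordered children; ranked labeled tree shapes are the quotient by
`RLTree.Equiv`). -/
inductive RLTree : Type
  | leaf : ℕ → RLTree
  | node : ℕ → RLTree → RLTree → RLTree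

namespace RLTree

/-- Multiset of leaf labels. -/
def leafLabels : RLTree → Multiset ℕ
  | leaf x => {x}
  | node _ l r => l.leafLabels + r.leafLabels

/-- Multiset of internal node ranks. -/
def ranks : RLTree → Multiset ℕ
  | leaf _ => 0
  | node k l r => k ::ₘ (l.ranks + r.ranks)

/-- Ranks strictly increase away from the root, starting above the bound `b`. -/
def IncreasingFrom : ℕ → RLTree → Prop
  | _, leaf _ => True
  | b, node k l r => b < k ∧ IncreasingFrom k l ∧ IncreasingFrom k r

/-- The labeled perfect phylogeny obtained by forgetting ranks and viewing each leaf as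
a singleton block. -/
def toLPP : RLTree → LPP
  | leaf x => LPP.leaf {x}
  | node _ l r => LPP.node l.toLPP r.toLPP

/-- `t.Valid s`: `t` is a ranked labeled tree whose leaves are labeled bijectively by
the sample set `s` and whose internal nodes carry the ranks `1, …, |s|-1`, each exactly
once, increasing from the root toward the leaves. -/
def Valid (t : RLTree) (s : Finset ℕ) : Prop :=
  t.leafLabels = s.val ∧ t.ranks = (Finset.Icc 1 (s.card - 1)).val ∧
    IncreasingFrom 0 t

/-- Equality of ranked labeled trees up to reordering of children. -/
inductive Equiv : RLTree → RLTree → Prop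
  | leaf (x : ℕ) : Equiv (leaf x) (leaf x)
  | node {k : ℕ} {a b c d : RLTree} :
      Equiv a c → Equiv b d → Equiv (node k a b) (node k c d)
  | swap {k : ℕ} {a b c d : RLTree} :
      Equiv a d → Equiv b c → Equiv (node k a b) (node k c d)

end RLTree

/-- `GLcount π` is the number of ranked labeled tree shapes compatible with the labeled
perfect phylogeny `π`. -/
noncomputable def GLcount (π : LPP) : ℕ :=
  Nat.card {q : Quot RLTree.Equiv //
    ∃ t : RLTree, Quot.mk _ t = q ∧ t.Valid π.samples ∧ LPP.Refines t.toLPP π}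

/-!
An equivalence class of valid ranked trees on `n` leaves contains exactly `2 ^ (n - 1)` ordered
trees, one for each choice of child order at the `n - 1` internal nodes, and compatibility with a
perfect phylogeny is a class invariant; so `GLcount π * 2 ^ (n - 1)` counts ordered compatible
trees. The root of an ordered ranked tree carries the smallest rank, and the tree is determined
by the leaf and rank sets of its left subtree together with the two ordered subtrees; by
induction there are `m ! * (m - 1)!` ordered ranked trees on `m` given leaves with `m - 1` given
ranks. A tree is compatible with the cherry `(A, B)` exactly when its root separates `A` from
`B`, so choosing which `x - 1` of the ranks `2, …, n - 1` go to the `A` side gives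
`2 * C(n - 2, x - 1) * x! (x - 1)! * (n - x)! (n - x - 1)!` ordered compatible trees.
-/

open scoped Nat

theorem Multiset.add_eq_val_iff {α : Type*} [DecidableEq α] {m₁ m₂ : Multiset α}
    {s : Finset α} : m₁ + m₂ = s.val ↔ ∃ s₁ ⊆ s, m₁ = s₁.val ∧ m₂ = (s \ s₁).val := by
  constructor
  · intro h
    have hnd : m₁.Nodup := (Multiset.nodup_add.mp (h ▸ s.nodup)).1
    refine ⟨⟨m₁, hnd⟩, Finset.val_le_iff.mp ?_, rfl, ?_⟩
    · rw [← h]; exact Multiset.le_add_right _ _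
    · rw [Finset.sdiff_val, ← h]; exact (add_tsub_cancel_left _ _).symm
  · rintro ⟨s₁, hs₁, rfl, rfl⟩
    rw [Finset.sdiff_val, add_tsub_cancel_of_le (Finset.val_le_iff.mpr hs₁)]

theorem Nat.choose_mul_choose_mul_factorials {n j : ℕ} (h₁ : 1 ≤ j) (h₂ : j < n) :
    (n - 2).choose (j - 1) * (j ! * (j - 1)!) * ((n - j)! * (n - j - 1)!) * n.choose j =
      n ! * (n - 2)! := by
  have e₁ := Nat.choose_mul_factorial_mul_factorial h₂.le
  have e₂ := Nat.choose_mul_factorial_mul_factorial (show j - 1 ≤ n - 2 by omega)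
  rw [show n - 2 - (j - 1) = n - j - 1 by omega] at e₂
  rw [← e₁, ← e₂]
  ring

theorem Finset.sum_powersetCard_choose_mul_factorials {α : Type*} [DecidableEq α] (S : Finset α)
    (hS : 2 ≤ S.card) :
    ∑ S₁ ∈ (Finset.Icc 1 (S.card - 1)).biUnion (S.powersetCard ·),
        (S.card - 2).choose (S₁.card - 1) * (S₁.card ! * (S₁.card - 1)!) *
          ((S.card - S₁.card)! * (S.card - S₁.card - 1)!) =
      S.card ! * (S.card - 1)! := by
  have hdisj : (Finset.Icc 1 (S.card - 1) : Set ℕ).PairwiseDisjoint (S.powersetCard ·) :=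
    fun i _ j _ hij => Finset.disjoint_left.mpr fun _ hi hj =>
      hij ((Finset.mem_powersetCard.mp hi).2.symm.trans (Finset.mem_powersetCard.mp hj).2)
  rw [Finset.sum_biUnion hdisj]
  calc _ = ∑ _j ∈ Finset.Icc 1 (S.card - 1), S.card ! * (S.card - 2)! := by
        refine Finset.sum_congr rfl fun j hj => ?_
        rw [Finset.sum_congr rfl fun S₁ h => by rw [(Finset.mem_powersetCard.mp h).2],
          Finset.sum_const, Finset.card_powersetCard, smul_eq_mul, mul_comm]
        rw [Finset.mem_Icc] at hj
        exact Nat.choose_mul_choose_mul_factorials hj.1 (by omega)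
    _ = S.card ! * (S.card - 1)! := by
        rw [Finset.sum_const, Nat.card_Icc, smul_eq_mul,
          ← Nat.mul_factorial_pred (show S.card - 1 ≠ 0 by omega),
          show S.card - 1 - 1 = S.card - 2 by omega, show S.card - 1 + 1 - 1 = S.card - 1 by omega]
        ring

theorem Nat.card_eq_card_mul_of_card_fiber {α β : Type*} [Finite α] [Finite β] (f : α → β)
    {c : ℕ} (hc : ∀ y, Nat.card {x // f x = y} = c) : Nat.card α = Nat.card β * c := by
  have := Fintype.ofFinite β
  rw [← Nat.card_congr (Equiv.sigmaFiberEquiv f), Nat.card_sigma,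
    Finset.sum_congr rfl fun y _ => hc y, Finset.sum_const, smul_eq_mul, Finset.card_univ,
    Nat.card_eq_fintype_card]

namespace LPP

theorem Step.samples_eq_s13 {a b : LPP} (h : Step a b) : a.samples = b.samples := by
  induction h with
  | cherry => rfl
  | swap => simp only [samples, Finset.union_comm]
  | left _ _ ih => simp only [samples, ih]
  | right _ _ ih => simp only [samples, ih]

theorem Refines.node_left {a b : LPP} (s : LPP) (h : Refines a b) :
    Refines (node a s) (node b s) :=
  Relation.ReflTransGen.lift (node · s) (fun _ _ => Step.left s) _ _ h

theorem Refines.node_right {a b : LPP} (s : LPP) (h : Refines a b) :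
    Refines (node s a) (node s b) :=
  Relation.ReflTransGen.lift (node s ·) (fun _ _ => Step.right s) _ _ h

theorem Refines.node_congr {a b c d : LPP} (h₁ : Refines a c) (h₂ : Refines b d) :
    Refines (node a b) (node c d) :=
  (h₁.node_left b).trans (h₂.node_right c)

theorem refines_leaf_samples : ∀ σ : LPP, Refines σ (leaf σ.samples)
  | leaf _ => .refl
  | node l r => ((refines_leaf_samples l).node_congr (refines_leaf_samples r)).tail (.cherry _ _)

theorem Step.exists_of_node {a σ τ : LPP} (h : Step a (node σ τ)) :
    ∃ l r, a = node l r ∧ (l.samples = σ.samples ∧ r.samples = τ.samples ∨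
      l.samples = τ.samples ∧ r.samples = σ.samples) := by
  cases h with
  | swap => exact ⟨τ, σ, rfl, .inr ⟨rfl, rfl⟩⟩
  | left _ h => exact ⟨_, τ, rfl, .inl ⟨h.samples_eq_s13, rfl⟩⟩
  | right _ h => exact ⟨σ, _, rfl, .inl ⟨rfl, h.samples_eq_s13⟩⟩

theorem Refines.exists_of_node {π σ τ : LPP} (h : Refines π (node σ τ)) :
    ∃ l r, π = node l r ∧ (l.samples = σ.samples ∧ r.samples = τ.samples ∨
      l.samples = τ.samples ∧ r.samples = σ.samples) := by
  induction h using Relation.ReflTransGen.head_induction_on with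
  | refl => exact ⟨σ, τ, rfl, .inl ⟨rfl, rfl⟩⟩
  | head hstep _ ih =>
    obtain ⟨l, r, rfl, hlr⟩ := ih
    obtain ⟨l', r', rfl, h⟩ := hstep.exists_of_node
    refine ⟨l', r', rfl, ?_⟩
    rcases h with ⟨h₁, h₂⟩ | ⟨h₁, h₂⟩ <;> rw [h₁, h₂] <;> tauto

end LPP

namespace RLTree

theorem Equiv.refl : ∀ t : RLTree, Equiv t t
  | .leaf x => .leaf x
  | .node _ l r => .node (Equiv.refl l) (Equiv.refl r)

theorem Equiv.symm {a b : RLTree} (h : Equiv a b) : Equiv b a := by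
  induction h with
  | leaf x => exact .leaf x
  | node _ _ ih₁ ih₂ => exact .node ih₁ ih₂
  | swap _ _ ih₁ ih₂ => exact .swap ih₂ ih₁

theorem Equiv.trans {a b c : RLTree} (h₁ : Equiv a b) (h₂ : Equiv b c) : Equiv a c := by
  induction h₁ generalizing c with
  | leaf => exact h₂
  | node _ _ ih₁ ih₂ =>
    cases h₂ with
    | node h h' => exact .node (ih₁ h) (ih₂ h')
    | swap h h' => exact .swap (ih₁ h) (ih₂ h')
  | swap _ _ ih₁ ih₂ =>
    cases h₂ with
    | node h h' => exact .swap (ih₁ h') (ih₂ h)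
    | swap h h' => exact .node (ih₁ h') (ih₂ h)

theorem equivalence_equiv : Equivalence Equiv :=
  ⟨Equiv.refl, Equiv.symm, Equiv.trans⟩

theorem quot_mk_eq_iff {a b : RLTree} : Quot.mk Equiv a = Quot.mk Equiv b ↔ Equiv a b :=
  Quot.eq.trans (Equivalence.eqvGen_iff equivalence_equiv)

theorem Equiv.leafLabels_eq {a b : RLTree} (h : Equiv a b) : a.leafLabels = b.leafLabels := by
  induction h with
  | leaf => rfl
  | node _ _ ih₁ ih₂ => simp only [leafLabels, ih₁, ih₂]
  | swap _ _ ih₁ ih₂ => simp only [leafLabels, ih₁, ih₂, add_comm]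

theorem Equiv.ranks_eq {a b : RLTree} (h : Equiv a b) : a.ranks = b.ranks := by
  induction h with
  | leaf => rfl
  | node _ _ ih₁ ih₂ => simp only [ranks, ih₁, ih₂]
  | swap _ _ ih₁ ih₂ => simp only [ranks, ih₁, ih₂, add_comm]

theorem Equiv.increasingFrom_iff {a b : RLTree} (h : Equiv a b) (m : ℕ) :
    IncreasingFrom m a ↔ IncreasingFrom m b := by
  induction h generalizing m with
  | leaf => rfl
  | node _ _ ih₁ ih₂ => simp only [IncreasingFrom, ih₁, ih₂]
  | swap _ _ ih₁ ih₂ => simp only [IncreasingFrom, ih₁, ih₂]; tauto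

theorem Equiv.valid_iff {a b : RLTree} (h : Equiv a b) (s : Finset ℕ) :
    a.Valid s ↔ b.Valid s := by
  simp only [Valid, h.leafLabels_eq, h.ranks_eq, h.increasingFrom_iff]

theorem exists_eq_node_of_equiv_node {t : RLTree} {k : ℕ} {l r : RLTree}
    (h : Equiv t (node k l r)) :
    ∃ a b, t = node k a b ∧ (Equiv a l ∧ Equiv b r ∨ Equiv a r ∧ Equiv b l) := by
  cases h with
  | node h₁ h₂ => exact ⟨_, _, rfl, .inl ⟨h₁, h₂⟩⟩
  | swap h₁ h₂ => exact ⟨_, _, rfl, .inr ⟨h₁, h₂⟩⟩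

theorem card_leafLabels : ∀ t : RLTree, t.leafLabels.card = t.ranks.card + 1
  | leaf _ => rfl
  | node _ l r => by
    simp only [leafLabels, ranks, Multiset.card_add, Multiset.card_cons, card_leafLabels l,
      card_leafLabels r]
    omega

theorem IncreasingFrom.lt_of_mem_ranks {t : RLTree} {b j : ℕ} (h : IncreasingFrom b t)
    (hj : j ∈ t.ranks) : b < j := by
  induction t generalizing b with
  | leaf => simp [ranks] at hj
  | node k l r ihl ihr =>
    obtain ⟨hbk, hl, hr⟩ := h
    rcases Multiset.mem_cons.mp hj with rfl | hj
    · exact hbk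
    · rcases Multiset.mem_add.mp hj with hj | hj
      · exact hbk.trans (ihl hl hj)
      · exact hbk.trans (ihr hr hj)

theorem samples_toLPP : ∀ t : RLTree, t.toLPP.samples = t.leafLabels.toFinset
  | leaf x => by simp [toLPP, LPP.samples, leafLabels]
  | node _ l r => by
    simp [toLPP, LPP.samples, leafLabels, samples_toLPP l, samples_toLPP r, Multiset.toFinset_add]

theorem Equiv.refines_toLPP {a b : RLTree} (h : Equiv a b) : LPP.Refines a.toLPP b.toLPP := by
  induction h with
  | leaf => exact .refl
  | node _ _ ih₁ ih₂ => exact ih₁.node_congr ih₂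
  | swap _ _ ih₁ ih₂ => exact (ih₁.node_congr ih₂).tail (.swap _ _)

def SplitsAs (S₁ S₂ : Finset ℕ) : RLTree → Prop
  | leaf _ => False
  | node _ l r => l.leafLabels = S₁.val ∧ r.leafLabels = S₂.val

theorem refines_cherry_iff {A B : Finset ℕ} {t : RLTree} (ht : t.leafLabels.Nodup) :
    LPP.Refines t.toLPP (.node (.leaf A) (.leaf B)) ↔ SplitsAs A B t ∨ SplitsAs B A t := by
  cases t with
  | leaf =>
    simp only [SplitsAs, or_self, iff_false]
    intro h
    obtain ⟨_, _, h, -⟩ := h.exists_of_node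
    cases h
  | node k l r =>
    obtain ⟨hl, hr, -⟩ := Multiset.nodup_add.mp ht
    have hsamples : ∀ {u : RLTree} (hu : u.leafLabels.Nodup) (C : Finset ℕ),
        u.toLPP.samples = C ↔ u.leafLabels = C.val := fun hu C => by
      rw [samples_toLPP, ← Multiset.toFinset_eq hu, ← Finset.val_inj]
    have hrefines : ∀ {u : RLTree} {C : Finset ℕ}, u.leafLabels = C.val →
        LPP.Refines u.toLPP (.leaf C) := fun {u} _ hu => by
      simpa [samples_toLPP, hu] using LPP.refines_leaf_samples u.toLPP
    constructor
    · intro h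
      obtain ⟨_, _, heq, hlr⟩ := h.exists_of_node
      obtain ⟨rfl, rfl⟩ := LPP.node.inj heq
      simpa only [SplitsAs, LPP.samples, hsamples hl, hsamples hr] using hlr
    · rintro (⟨hlA, hrB⟩ | ⟨hlB, hrA⟩)
      · exact (hrefines hlA).node_congr (hrefines hrB)
      · exact ((hrefines hlB).node_congr (hrefines hrA)).tail (.swap _ _)

theorem finite_setOf_leafLabels_le_ranks_le (L K : Multiset ℕ) : ∀ n : ℕ,
    {t : RLTree | t.leafLabels ≤ L ∧ t.ranks ≤ K ∧ t.leafLabels.card ≤ n}.Finite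
  | 0 => by
    convert Set.finite_empty
    ext t
    simp [card_leafLabels]
  | n + 1 => by
    have ih := finite_setOf_leafLabels_le_ranks_le L K n
    refine ((L.toFinset.finite_toSet.image leaf).union ((K.toFinset.finite_toSet.prod
      (ih.prod ih)).image fun p => node p.1 p.2.1 p.2.2)).subset ?_
    rintro (x | ⟨k, l, r⟩) ⟨hL, hK, hn⟩
    · exact .inl ⟨x, by simpa [leafLabels] using hL, rfl⟩
    · have := card_leafLabels l
      have := card_leafLabels r
      simp only [leafLabels, ranks, Multiset.card_add] at hL hK hn
      refine .inr ⟨(k, l, r),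
        ⟨?_, ⟨?_, ?_, by dsimp only; omega⟩, ?_, ?_, by dsimp only; omega⟩, rfl⟩
      · exact Multiset.mem_toFinset.mpr (Multiset.mem_of_le hK (Multiset.mem_cons_self _ _))
      · exact (Multiset.le_add_right _ _).trans hL
      · exact (Multiset.le_add_right _ _).trans ((Multiset.le_cons_self _ _).trans hK)
      · exact (Multiset.le_add_left _ _).trans hL
      · exact (Multiset.le_add_left _ _).trans ((Multiset.le_cons_self _ _).trans hK)

theorem finite_of_leafLabels_ranks_eq {P : RLTree → Prop} (L K : Multiset ℕ)
    (h : ∀ t, P t → t.leafLabels = L ∧ t.ranks = K) : Finite {t // P t} :=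
  Set.Finite.to_subtype <| (finite_setOf_leafLabels_le_ranks_le L K L.card).subset fun t ht => by
    obtain ⟨h₁, h₂⟩ := h t ht
    exact ⟨h₁.le, h₂.le, h₁ ▸ le_rfl⟩

/-- Subtrees of a valid tree are ranked on arbitrary rank sets above their parent's rank;
`t.Valid s` is `IsRankedOn s (Icc 1 (#s - 1)) 0 t`. -/
def IsRankedOn (S R : Finset ℕ) (b : ℕ) (t : RLTree) : Prop :=
  t.leafLabels = S.val ∧ t.ranks = R.val ∧ IncreasingFrom b t

instance (S R : Finset ℕ) (b : ℕ) : Finite {t // IsRankedOn S R b t} :=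
  finite_of_leafLabels_ranks_eq S.val R.val fun _ h => ⟨h.1, h.2.1⟩

section Counting

variable {S S₁ R : Finset ℕ} {b : ℕ}

theorem isRankedOn_node_and_splitsAs_iff (hR : R.Nonempty) (hb : ∀ j ∈ R, b < j)
    (hS₁ : S₁ ⊆ S) {k : ℕ} {l r : RLTree} :
    IsRankedOn S R b (node k l r) ∧ SplitsAs S₁ (S \ S₁) (node k l r) ↔
      k = R.min' hR ∧ ∃ R₁ ⊆ R.erase k,
        IsRankedOn S₁ R₁ k l ∧ IsRankedOn (S \ S₁) (R.erase k \ R₁) k r := by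
  constructor
  · rintro ⟨⟨-, hK, -, hl, hr⟩, hlS, hrS⟩
    have hmem : ∀ {j}, j ∈ R ↔ j = k ∨ j ∈ l.ranks + r.ranks := by
      intro j; rw [Finset.mem_def, ← hK]; exact Multiset.mem_cons
    have hmin : ∀ j ∈ R, k ≤ j := fun j hj => by
      rcases hmem.mp hj with rfl | hj
      · rfl
      · rcases Multiset.mem_add.mp hj with hj | hj
        exacts [(hl.lt_of_mem_ranks hj).le, (hr.lt_of_mem_ranks hj).le]
    have hranks : l.ranks + r.ranks = (R.erase k).val := by
      rw [Finset.erase_val, ← hK, ranks, Multiset.erase_cons_head]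
    obtain ⟨R₁, hR₁, hl₁, hr₁⟩ := Multiset.add_eq_val_iff.mp hranks
    exact ⟨le_antisymm (hmin _ (R.min'_mem hR)) (R.min'_le k (hmem.mpr (.inl rfl))),
      R₁, hR₁, ⟨hlS, hl₁, hl⟩, ⟨hrS, hr₁, hr⟩⟩
  · rintro ⟨rfl, R₁, hR₁, ⟨hlS, hl₁, hl⟩, ⟨hrS, hr₁, hr⟩⟩
    refine ⟨⟨Multiset.add_eq_val_iff.mpr ⟨S₁, hS₁, hlS, hrS⟩, ?_, hb _ (R.min'_mem hR), hl, hr⟩,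
      hlS, hrS⟩
    change _ ::ₘ (l.ranks + r.ranks) = R.val
    rw [Multiset.add_eq_val_iff.mpr ⟨R₁, hR₁, hl₁, hr₁⟩, Finset.erase_val,
      Multiset.cons_erase (R.min'_mem hR)]

theorem IsRankedOn.exists_splitsAs {t : RLTree} (ht : IsRankedOn S R b t) (hR : R.Nonempty) :
    ∃ S₁ ⊆ S, 0 < S₁.card ∧ S₁.card < S.card ∧ SplitsAs S₁ (S \ S₁) t := by
  obtain ⟨hL, hK, -⟩ := ht
  cases t with
  | leaf => exact absurd hK.symm (by simpa [ranks] using hR.ne_empty)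
  | node k l r =>
    obtain ⟨S₁, hS₁, hl, hr⟩ := Multiset.add_eq_val_iff.mp hL
    have h₁ : S₁.card = l.ranks.card + 1 := by rw [← card_leafLabels, hl]; rfl
    have h₂ : S.card - S₁.card = r.ranks.card + 1 := by
      rw [← Finset.card_sdiff_of_subset hS₁, ← card_leafLabels, hr]; rfl
    exact ⟨S₁, hS₁, by omega, by omega, hl, hr⟩

theorem card_isRankedOn_exists_splitsAs (hR : R.Nonempty) (hb : ∀ j ∈ R, b < j)
    (D : Finset (Finset ℕ)) (hD : ∀ S₁ ∈ D, S₁ ⊆ S) :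
    Nat.card {t // IsRankedOn S R b t ∧ ∃ S₁ ∈ D, SplitsAs S₁ (S \ S₁) t} =
      ∑ S₁ ∈ D, ∑ R₁ ∈ (R.erase (R.min' hR)).powersetCard (S₁.card - 1),
        Nat.card {l // IsRankedOn S₁ R₁ (R.min' hR) l} *
          Nat.card {r // IsRankedOn (S \ S₁) (R.erase (R.min' hR) \ R₁) (R.min' hR) r} := by
  set k := R.min' hR
  let glue : (Σ p : D.sigma fun S₁ => (R.erase k).powersetCard (S₁.card - 1),
      {l // IsRankedOn p.1.1 p.1.2 k l} ×
        {r // IsRankedOn (S \ p.1.1) (R.erase k \ p.1.2) k r}) →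
      {t // IsRankedOn S R b t ∧ ∃ S₁ ∈ D, SplitsAs S₁ (S \ S₁) t} :=
    fun ⟨⟨⟨S₁, R₁⟩, hp⟩, l, r⟩ =>
      have hp := Finset.mem_sigma.mp hp
      have h := (isRankedOn_node_and_splitsAs_iff hR hb (hD S₁ hp.1)).mpr
        ⟨rfl, R₁, (Finset.mem_powersetCard.mp hp.2).1, l.2, r.2⟩
      ⟨node k l r, h.1, S₁, hp.1, h.2⟩
  have hinj : Function.Injective glue := by
    rintro ⟨⟨⟨S₁, R₁⟩, hp⟩, ⟨l, hl⟩, ⟨r, hr⟩⟩ ⟨⟨⟨S₁', R₁'⟩, hp'⟩, ⟨l', hl'⟩, ⟨r', hr'⟩⟩ h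
    obtain ⟨-, rfl, rfl⟩ := node.inj (congrArg Subtype.val h)
    obtain rfl : S₁ = S₁' := Finset.val_inj.mp (hl.1.symm.trans hl'.1)
    obtain rfl : R₁ = R₁' := Finset.val_inj.mp (hl.2.1.symm.trans hl'.2.1)
    rfl
  have hsurj : Function.Surjective glue := by
    rintro ⟨_ | ⟨k', l, r⟩, ht, S₁, hS₁D, hsplit⟩
    · exact hsplit.elim
    obtain ⟨rfl, R₁, hR₁, hl, hr⟩ :=
      (isRankedOn_node_and_splitsAs_iff hR hb (hD S₁ hS₁D)).mp ⟨ht, hsplit⟩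
    have hcard : R₁.card = S₁.card - 1 := by
      have := card_leafLabels l
      rw [hl.1, hl.2.1] at this
      exact (Nat.sub_eq_of_eq_add this).symm
    exact ⟨⟨⟨⟨S₁, R₁⟩, Finset.mem_sigma.mpr ⟨hS₁D, Finset.mem_powersetCard.mpr ⟨hR₁, hcard⟩⟩⟩,
      ⟨l, hl⟩, ⟨r, hr⟩⟩, rfl⟩
  rw [← Nat.card_eq_of_bijective glue ⟨hinj, hsurj⟩, Nat.card_sigma]
  simp only [Nat.card_prod]
  exact (Finset.sum_coe_sort _ fun p : (_ : Finset ℕ) × Finset ℕ =>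
    Nat.card {l // IsRankedOn p.1 p.2 k l} *
      Nat.card {r // IsRankedOn (S \ p.1) (R.erase k \ p.2) k r}).trans (Finset.sum_sigma _ _ _)

theorem sum_card_isRankedOn_mul (hR : R.Nonempty) (hS : S.card = R.card + 1) (hS₁ : S₁ ⊆ S)
    (h₀ : 0 < S₁.card) (hlt : S₁.card < S.card)
    (hcount : ∀ S' R' : Finset ℕ, S'.card < S.card → S'.card = R'.card + 1 →
      (∀ j ∈ R', R.min' hR < j) →
        Nat.card {t // IsRankedOn S' R' (R.min' hR) t} = S'.card ! * R'.card !) :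
    ∑ R₁ ∈ (R.erase (R.min' hR)).powersetCard (S₁.card - 1),
        Nat.card {l // IsRankedOn S₁ R₁ (R.min' hR) l} *
          Nat.card {r // IsRankedOn (S \ S₁) (R.erase (R.min' hR) \ R₁) (R.min' hR) r} =
      (S.card - 2).choose (S₁.card - 1) * (S₁.card ! * (S₁.card - 1)!) *
        ((S.card - S₁.card)! * (S.card - S₁.card - 1)!) := by
  set k := R.min' hR
  have hgt : ∀ j ∈ R.erase k, k < j := fun j hj => R.min'_lt_of_mem_erase_min' hR hj
  have hcardR : (R.erase k).card = S.card - 2 := by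
    rw [Finset.card_erase_of_mem (R.min'_mem hR)]; omega
  have hcardS : (S \ S₁).card = S.card - S₁.card := Finset.card_sdiff_of_subset hS₁
  have hterm : ∀ R₁ ∈ (R.erase k).powersetCard (S₁.card - 1),
      Nat.card {l // IsRankedOn S₁ R₁ k l} *
          Nat.card {r // IsRankedOn (S \ S₁) (R.erase k \ R₁) k r} =
        S₁.card ! * (S₁.card - 1)! * ((S.card - S₁.card)! * (S.card - S₁.card - 1)!) := by
    intro R₁ hR₁
    obtain ⟨hsub, hcard⟩ := Finset.mem_powersetCard.mp hR₁
    have hcard' : (R.erase k \ R₁).card = S.card - S₁.card - 1 := by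
      rw [Finset.card_sdiff_of_subset hsub, hcardR, hcard]; omega
    rw [hcount S₁ R₁ hlt (by omega) fun j hj => hgt j (hsub hj),
      hcount (S \ S₁) _ (by omega) (by omega) fun j hj => hgt j (Finset.mem_sdiff.mp hj).1,
      hcard, hcardS, hcard']
  rw [Finset.sum_congr rfl hterm, Finset.sum_const, Finset.card_powersetCard, hcardR,
    smul_eq_mul, ← mul_assoc]

theorem card_isRankedOn (hS : S.card = R.card + 1) (hb : ∀ j ∈ R, b < j) :
    Nat.card {t // IsRankedOn S R b t} = S.card ! * R.card ! := by
  induction hn : S.card using Nat.strong_induction_on generalizing S R b with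
  | _ n ih =>
  subst hn
  rcases R.eq_empty_or_nonempty with rfl | hR
  · obtain ⟨a, rfl⟩ := Finset.card_eq_one.mp hS
    have hleaf : ∀ t, IsRankedOn {a} ∅ b t ↔ t = leaf a := by
      rintro (x | ⟨k, l, r⟩) <;> simp [IsRankedOn, leafLabels, ranks, IncreasingFrom]
    rw [Nat.card_congr (Equiv.subtypeEquivRight hleaf), Nat.card_unique]
    rfl
  · set D := (Finset.Icc 1 (S.card - 1)).biUnion (S.powersetCard ·)
    have hD : ∀ S₁ ∈ D, S₁ ⊆ S ∧ 0 < S₁.card ∧ S₁.card < S.card := fun S₁ h => by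
      obtain ⟨j, hj, hS₁⟩ := Finset.mem_biUnion.mp h
      obtain ⟨hsub, rfl⟩ := Finset.mem_powersetCard.mp hS₁
      rw [Finset.mem_Icc] at hj
      exact ⟨hsub, by omega, by omega⟩
    have hsplit : ∀ t, IsRankedOn S R b t ↔
        IsRankedOn S R b t ∧ ∃ S₁ ∈ D, SplitsAs S₁ (S \ S₁) t := fun t => by
      refine ⟨fun ht => ⟨ht, ?_⟩, And.left⟩
      obtain ⟨S₁, hsub, h₀, hlt, h⟩ := ht.exists_splitsAs hR
      exact ⟨S₁, Finset.mem_biUnion.mpr ⟨S₁.card, Finset.mem_Icc.mpr ⟨h₀, by omega⟩,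
        Finset.mem_powersetCard.mpr ⟨hsub, rfl⟩⟩, h⟩
    rw [Nat.card_congr (Equiv.subtypeEquivRight hsplit),
      card_isRankedOn_exists_splitsAs hR hb D fun S₁ h => (hD S₁ h).1,
      Finset.sum_congr rfl fun S₁ h => sum_card_isRankedOn_mul hR hS (hD S₁ h).1 (hD S₁ h).2.1
        (hD S₁ h).2.2 fun S' R' h₁ h₂ h₃ => ih _ h₁ h₂ h₃ rfl,
      Finset.sum_powersetCard_choose_mul_factorials S (by have := hR.card_pos; omega), hS,
      Nat.add_sub_cancel]

end Counting

instance (t : RLTree) : Finite {t' // Equiv t' t} :=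
  finite_of_leafLabels_ranks_eq t.leafLabels t.ranks fun _ h => ⟨h.leafLabels_eq, h.ranks_eq⟩

theorem card_equiv_eq_two_pow : ∀ t : RLTree, t.leafLabels.Nodup →
    Nat.card {t' // Equiv t' t} = 2 ^ t.ranks.card
  | .leaf x, _ => by
    have hleaf : ∀ t', Equiv t' (leaf x) ↔ t' = leaf x :=
      fun t' => ⟨fun h => by cases h; rfl, fun h => h ▸ .refl _⟩
    rw [Nat.card_congr (Equiv.subtypeEquivRight hleaf), Nat.card_unique]
    rfl
  | .node k l r, hnd => by
    obtain ⟨hl, hr, hdisj⟩ := Multiset.nodup_add.mp hnd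
    -- `l` and `r` have disjoint nonempty leaf sets
    have hne : ∀ {a b : RLTree}, Equiv a l → Equiv b r → a ≠ b := fun ha hb hab => by
      obtain ⟨y, hy⟩ := Multiset.card_pos_iff_exists_mem.mp
        (by rw [card_leafLabels]; omega : 0 < l.leafLabels.card)
      refine Multiset.disjoint_left.mp hdisj hy ?_
      rwa [← hb.leafLabels_eq, ← hab, ha.leafLabels_eq]
    let glue : ({a // Equiv a l} × {b // Equiv b r}) ⊕ ({a // Equiv a r} × {b // Equiv b l}) →
        {t' // Equiv t' (node k l r)} :=
      Sum.elim (fun p => ⟨node k p.1 p.2, .node p.1.2 p.2.2⟩)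
        (fun p => ⟨node k p.1 p.2, .swap p.1.2 p.2.2⟩)
    have hinj : Function.Injective glue := by
      rintro (⟨⟨a, ha⟩, ⟨b, hb⟩⟩ | ⟨⟨a, ha⟩, ⟨b, hb⟩⟩)
        (⟨⟨a', ha'⟩, ⟨b', hb'⟩⟩ | ⟨⟨a', ha'⟩, ⟨b', hb'⟩⟩) h <;>
        obtain ⟨-, rfl, rfl⟩ := node.inj (congrArg Subtype.val h)
      · rfl
      · exact (hne ha ha' rfl).elim
      · exact (hne ha' ha rfl).elim
      · rfl
    have hsurj : Function.Surjective glue := by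
      rintro ⟨t', ht'⟩
      obtain ⟨a, b, rfl, ⟨ha, hb⟩ | ⟨ha, hb⟩⟩ := exists_eq_node_of_equiv_node ht'
      exacts [⟨.inl (⟨a, ha⟩, ⟨b, hb⟩), rfl⟩, ⟨.inr (⟨a, ha⟩, ⟨b, hb⟩), rfl⟩]
    rw [← Nat.card_eq_of_bijective glue ⟨hinj, hsurj⟩, Nat.card_sum, Nat.card_prod,
      Nat.card_prod, card_equiv_eq_two_pow l hl, card_equiv_eq_two_pow r hr]
    simp only [ranks, Multiset.card_cons, Multiset.card_add]
    ring

theorem card_compatible_eq_GLcount_mul (π : LPP) :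
    Nat.card {t : RLTree // t.Valid π.samples ∧ LPP.Refines t.toLPP π} =
      GLcount π * 2 ^ (π.samples.card - 1) := by
  set P := fun t : RLTree => t.Valid π.samples ∧ LPP.Refines t.toLPP π
  have hP : ∀ {t t'}, Equiv t t' → P t' → P t :=
    fun h ht' => ⟨(h.valid_iff _).mpr ht'.1, h.refines_toLPP.trans ht'.2⟩
  have : Finite {t // P t} := finite_of_leafLabels_ranks_eq _ _ fun _ h => ⟨h.1.1, h.1.2.1⟩
  let F : {t // P t} → {q : Quot Equiv // ∃ t, Quot.mk _ t = q ∧ P t} :=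
    fun t => ⟨Quot.mk _ t.1, t.1, rfl, t.2⟩
  have : Finite {q : Quot Equiv // ∃ t, Quot.mk _ t = q ∧ P t} :=
    Finite.of_surjective F fun ⟨_, t, hq, ht⟩ => ⟨⟨t, ht⟩, Subtype.ext hq⟩
  refine Nat.card_eq_card_mul_of_card_fiber F fun ⟨q, t₀, hq, ht₀⟩ => ?_
  let g : {t' // Equiv t' t₀} → {x // F x = ⟨q, t₀, hq, ht₀⟩} :=
    fun u => ⟨⟨u.1, hP u.2 ht₀⟩, Subtype.ext (hq ▸ Quot.sound u.2)⟩
  have hbij : Function.Bijective g := by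
    refine ⟨fun u v h => Subtype.ext (congrArg (·.1.1) h), ?_⟩
    rintro ⟨⟨t, ht⟩, hFt⟩
    exact ⟨⟨t, quot_mk_eq_iff.mp ((congrArg Subtype.val hFt).trans hq.symm)⟩, rfl⟩
  rw [← Nat.card_eq_of_bijective g hbij,
    card_equiv_eq_two_pow t₀ (ht₀.1.1 ▸ π.samples.nodup), ht₀.1.2.1]
  simp

theorem card_compatible_cherry {n x : ℕ} {A B : Finset ℕ} (hx : 1 ≤ x) (hxn : x < n)
    (hA : A.card = x) (hB : B.card = n - x) (hAB : Disjoint A B) :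
    Nat.card {t : RLTree // t.Valid (A ∪ B) ∧ LPP.Refines t.toLPP (.node (.leaf A) (.leaf B))} =
      2 * ((n - 2).choose (x - 1) * (x ! * (x - 1)!) * ((n - x)! * (n - x - 1)!)) := by
  have hn : (A ∪ B).card = n := by rw [Finset.card_union_of_disjoint hAB, hA, hB]; omega
  have hR : (Finset.Icc 1 (n - 1)).Nonempty := Finset.nonempty_Icc.mpr (by omega)
  have hRcard : (A ∪ B).card = (Finset.Icc 1 (n - 1)).card + 1 := by
    rw [hn, Nat.card_Icc]; omega
  have hne : A ≠ B := by
    rintro rfl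
    rw [(Finset.disjoint_self_iff_empty A).mp hAB, Finset.card_empty] at hA
    omega
  have hiff : ∀ t : RLTree, t.Valid (A ∪ B) ∧ LPP.Refines t.toLPP (.node (.leaf A) (.leaf B)) ↔
      IsRankedOn (A ∪ B) (Finset.Icc 1 (n - 1)) 0 t ∧
        ∃ S₁ ∈ ({A, B} : Finset _), SplitsAs S₁ ((A ∪ B) \ S₁) t := fun t => by
    simp only [Finset.mem_insert, Finset.mem_singleton, exists_eq_or_imp, exists_eq_left,
      Finset.union_sdiff_cancel_left hAB, Finset.union_sdiff_cancel_right hAB, ← hn]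
    exact and_congr_right fun ht => refines_cherry_iff (ht.1 ▸ (A ∪ B).nodup)
  have hcount : ∀ S' R' : Finset ℕ, S'.card < (A ∪ B).card → S'.card = R'.card + 1 →
      (∀ j ∈ R', (Finset.Icc 1 (n - 1)).min' hR < j) →
        Nat.card {t // IsRankedOn S' R' ((Finset.Icc 1 (n - 1)).min' hR) t} =
          S'.card ! * R'.card ! := fun _ _ _ => card_isRankedOn
  rw [Nat.card_congr (Equiv.subtypeEquivRight hiff),
    card_isRankedOn_exists_splitsAs hR (fun j hj => (Finset.mem_Icc.mp hj).1) _
      (by simp [Finset.subset_union_left, Finset.subset_union_right]),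
    Finset.sum_pair hne,
    sum_card_isRankedOn_mul hR hRcard Finset.subset_union_left (by omega) (by omega) hcount,
    sum_card_isRankedOn_mul hR hRcard Finset.subset_union_right (by omega) (by omega) hcount,
    hA, hB, hn, Nat.sub_sub_self hxn.le,
    Nat.choose_symm_of_eq_add (show n - 2 = n - x - 1 + (x - 1) by omega)]
  ring

theorem GLcount_cherry_mul_two_pow {n x : ℕ} {A B : Finset ℕ} (hx : 1 ≤ x) (hxn : x < n)
    (hA : A.card = x) (hB : B.card = n - x) (hAB : Disjoint A B) :
    GLcount (.node (.leaf A) (.leaf B)) * 2 ^ (n - 2) =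
      (n - 2).choose (x - 1) * (x ! * (x - 1)!) * ((n - x)! * (n - x - 1)!) := by
  have hn : (A ∪ B).card = n := by rw [Finset.card_union_of_disjoint hAB, hA, hB]; omega
  have h := (card_compatible_cherry hx hxn hA hB hAB).symm.trans
    (card_compatible_eq_GLcount_mul (.node (.leaf A) (.leaf B)))
  rw [LPP.samples, LPP.samples, LPP.samples, hn, show n - 1 = n - 2 + 1 by omega, pow_succ] at h
  linarith

end RLTree

/-- The number of ranked labeled tree shapes compatible with the labeled cherry perfect
phylogeny `(x, n-x)` (one leaf carrying a fixed set `A` of `x` samples, the other its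
complement `B` of `n-x` samples) equals `C(n-2, x-1) L_x L_{n-x}`, which equals
`[n!(n-2)!/2^{n-2}] / C(n,x)`, where `L_m = m!(m-1)!/2^{m-1}`. -/
theorem rankedLabeled_compatible_cherry (n x : ℕ) (A B : Finset ℕ) (L : ℕ → ℕ)
    (hL : ∀ m : ℕ, 1 ≤ m → L m * 2 ^ (m - 1) = Nat.factorial m * Nat.factorial (m - 1))
    (hx : 1 ≤ x) (hxn : x < n)
    (hA : A.card = x) (hB : B.card = n - x) (hAB : Disjoint A B) :
    GLcount (LPP.node (LPP.leaf A) (LPP.leaf B)) =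
      (n - 2).choose (x - 1) * L x * L (n - x) ∧
    GLcount (LPP.node (LPP.leaf A) (LPP.leaf B)) * 2 ^ (n - 2) * n.choose x =
      Nat.factorial n * Nat.factorial (n - 2) := by
  have hG := RLTree.GLcount_cherry_mul_two_pow hx hxn hA hB hAB
  refine ⟨Nat.eq_of_mul_eq_mul_right (pow_pos two_pos (n - 2)) ?_,
    hG ▸ Nat.choose_mul_choose_mul_factorials hx hxn⟩
  calc _ = (n - 2).choose (x - 1) * (L x * 2 ^ (x - 1)) * (L (n - x) * 2 ^ (n - x - 1)) := by
        rw [hG, hL x hx, hL (n - x) (by omega)]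
    _ = (n - 2).choose (x - 1) * L x * L (n - x) * 2 ^ (x - 1 + (n - x - 1)) := by ring
    _ = _ := by rw [show x - 1 + (n - x - 1) = n - 2 by omega]
end
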